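/- Let $n \geq 1$ and $m \geq 0$ be integers and define the kernel $$k(t) = (-1)^n\sum_{j=0}^m \frac{P_{n+2j}(t)\,P_{n+2j}^{(n)}(0)}{h_{n+2j}},$$ where $P_N^{(n)}$ denotes the $n$-th derivative of $P_N$ and $h_N = 2/(2N+1)$. Then the moments of $k$ satisfy $$\int_{-1}^1 t^{\ell}\,k(t)\,dt = \begin{cases} (-1)^n\, n! & \text{if } \ell = n,\\ 0 & \text{if } \ell \in \{0,1,\dots,n+2m+1\},\ \ell \neq n.\end{cases}$$ -/

import Mathlib

open Real Filter Finset intervalIntegral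

/-- Legendre polynomial of degree `n` (Rodrigues formula), the orthogonal polynomial
on `[-1,1]` with weight `1` normalized by `P n 1 = 1`. -/
noncomputable def legendreP (n : ℕ) : ℝ → ℝ :=
  fun x => (1 / ((2:ℝ) ^ n * (Nat.factorial n : ℝ))) *
    iteratedDeriv n (fun y : ℝ => (y ^ 2 - 1) ^ n) x

/-- The kernel `k(t) = (-1)^n ∑_{j=0}^m P_{n+2j}(t) P_{n+2j}^{(n)}(0) / h_{n+2j}`
with `h_N = 2/(2N+1)`. -/
noncomputable def kker (n m : ℕ) (t : ℝ) : ℝ :=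
  (-1:ℝ)^n * ∑ j ∈ Finset.range (m+1),
    legendreP (n + 2*j) t * iteratedDeriv n (legendreP (n + 2*j)) 0 /
      (2 / (2*((n:ℝ) + 2*(j:ℝ)) + 1))
/-!
If `S` contains every `N ≤ D` with `P_N^{(n)}(0) ≠ 0`, then
`K = ∑_{N ∈ S} P_N^{(n)}(0) P_N / h_N` reproduces the `n`-th derivative at `0` on polynomials of
degree at most `D`: expand `p` in the Legendre basis and use orthogonality together with
`∫ P_N² = h_N`, which both follow from Rodrigues' formula by integrating by parts.
Since `P_N` has degree `N` and the parity of `N`, for `D = n + 2m + 1` the relevant `N` are exactly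
`n, n + 2, …, n + 2m`, so `k = (-1)^n K`, and `p = tˡ` gives the moments.
-/

open Polynomial
open scoped Nat

theorem Polynomial.iteratedDeriv_eval {𝕜 : Type*} [NontriviallyNormedField 𝕜] (p : 𝕜[X])
    (k : ℕ) : iteratedDeriv k (fun x => p.eval x) = fun x => (derivative^[k] p).eval x := by
  induction k generalizing p with
  | zero => simp
  | succ k ih =>
    rw [iteratedDeriv_succ', Function.iterate_succ_apply, ← ih]
    congr 1
    ext x
    exact p.deriv

theorem Polynomial.isRoot_iterate_derivative_of_pow_dvd {R : Type*} [CommRing R] {p : R[X]}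
    {t : R} {N k : ℕ} (h : (X - C t) ^ N ∣ p) (hk : k < N) : (derivative^[k] p).IsRoot t :=
  dvd_iff_isRoot.mp <| (dvd_pow_self _ (Nat.sub_ne_zero_of_lt hk)).trans
    (pow_sub_dvd_iterate_derivative_of_pow_dvd _ h)

theorem Polynomial.iterate_derivative_eq_C_of_natDegree_le {R : Type*} [Semiring R] {p : R[X]}
    {N : ℕ} (h : p.natDegree ≤ N) : derivative^[N] p = C ((N ! : R) * p.coeff N) := by
  rw [eq_C_of_natDegree_le_zero ((natDegree_iterate_derivative p N).trans (by omega)),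
    coeff_iterate_derivative, zero_add, Nat.descFactorial_self, nsmul_eq_mul]

theorem integral_eval_mul_derivative_eval (p r : ℝ[X]) (a b : ℝ) :
    ∫ x in a..b, p.eval x * (derivative r).eval x =
      p.eval b * r.eval b - p.eval a * r.eval a - ∫ x in a..b, (derivative p).eval x * r.eval x :=
  integral_mul_deriv_eq_deriv_mul (fun x _ => p.hasDerivAt x) (fun x _ => r.hasDerivAt x)
    ((derivative p).continuous.intervalIntegrable a b)
    ((derivative r).continuous.intervalIntegrable a b)

theorem integral_eval_mul_iterate_derivative_eval {p r : ℝ[X]} {a b : ℝ} {j : ℕ}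
    (ha : ∀ k < j, (derivative^[k] r).IsRoot a) (hb : ∀ k < j, (derivative^[k] r).IsRoot b) :
    ∫ x in a..b, p.eval x * (derivative^[j] r).eval x =
      (-1) ^ j * ∫ x in a..b, (derivative^[j] p).eval x * r.eval x := by
  induction j generalizing p with
  | zero => simp
  | succ j ih =>
    rw [Function.iterate_succ_apply', integral_eval_mul_derivative_eval,
      (ha j j.lt_succ_self).eq_zero, (hb j j.lt_succ_self).eq_zero,
      ih (fun k hk => ha k (hk.trans j.lt_succ_self)) (fun k hk => hb k (hk.trans j.lt_succ_self)),
      Function.iterate_succ_apply, pow_succ]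
    ring

theorem X_sq_sub_one_pow_eq_expand (N : ℕ) :
    (X ^ 2 - 1 : ℝ[X]) ^ N = expand ℝ 2 ((X - C 1) ^ N) := by
  simp

theorem X_sq_sub_one_pow_eq_mul (N : ℕ) :
    (X ^ 2 - 1 : ℝ[X]) ^ N = (X - C 1) ^ N * (X - C (-1)) ^ N := by
  rw [← mul_pow, C_1, C_neg, C_1]
  ring

theorem natDegree_X_sq_sub_one_pow (N : ℕ) : ((X ^ 2 - 1 : ℝ[X]) ^ N).natDegree = 2 * N := by
  rw [X_sq_sub_one_pow_eq_expand, natDegree_expand, natDegree_pow, natDegree_X_sub_C, mul_one,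
    mul_comm]

theorem coeff_X_sq_sub_one_pow_two_mul (N : ℕ) :
    ((X ^ 2 - 1 : ℝ[X]) ^ N).coeff (2 * N) = 1 := by
  rw [X_sq_sub_one_pow_eq_expand, coeff_expand_mul' two_pos]
  have := ((monic_X_sub_C (1 : ℝ)).pow N).coeff_natDegree
  rwa [natDegree_pow, natDegree_X_sub_C, mul_one] at this

theorem coeff_X_sq_sub_one_pow_of_odd {N k : ℕ} (hk : Odd k) :
    ((X ^ 2 - 1 : ℝ[X]) ^ N).coeff k = 0 := by
  rw [X_sq_sub_one_pow_eq_expand, coeff_expand two_pos, if_neg hk.not_two_dvd_nat]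

theorem integral_sq_sub_one_pow_succ (k : ℕ) :
    (2 * k + 3 : ℝ) * ∫ x in (-1 : ℝ)..1, (x ^ 2 - 1) ^ (k + 1) =
      -(2 * k + 2 : ℝ) * ∫ x in (-1 : ℝ)..1, (x ^ 2 - 1) ^ k := by
  have hderiv : ∀ x : ℝ, HasDerivAt (fun x => x * (x ^ 2 - 1) ^ (k + 1))
      ((2 * k + 3) * (x ^ 2 - 1) ^ (k + 1) + (2 * k + 2) * (x ^ 2 - 1) ^ k) x := by
    intro x
    refine ((hasDerivAt_id' x).mul
      (((hasDerivAt_pow 2 x).sub_const 1).fun_pow (k + 1))).congr_deriv ?_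
    push_cast
    ring
  have hint : ∀ j : ℕ,
      IntervalIntegrable (fun x : ℝ => (x ^ 2 - 1) ^ j) MeasureTheory.volume (-1) 1 := fun j =>
    (by fun_prop : Continuous fun x : ℝ => (x ^ 2 - 1) ^ j).intervalIntegrable _ _
  have hftc := integral_eq_sub_of_hasDerivAt (fun x _ => hderiv x)
    (((hint _).const_mul _).add ((hint _).const_mul _))
  rw [integral_add ((hint _).const_mul _) ((hint _).const_mul _), integral_const_mul,
    integral_const_mul] at hftc
  norm_num at hftc
  linarith

theorem integral_sq_sub_one_pow (N : ℕ) :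
    ∫ x in (-1 : ℝ)..1, (x ^ 2 - 1) ^ N =
      (-1) ^ N * 2 ^ (2 * N + 1) * (N ! : ℝ) ^ 2 / (2 * N + 1)! := by
  induction N with
  | zero => norm_num
  | succ k ih =>
    have hrec := integral_sq_sub_one_pow_succ k
    rw [ih] at hrec
    have hfac : ((2 * (k + 1) + 1)! : ℝ) = (2 * k + 3) * (2 * k + 2) * (2 * k + 1)! := by
      rw [show 2 * (k + 1) + 1 = (2 * k + 1) + 1 + 1 by ring, Nat.factorial_succ,
        Nat.factorial_succ]
      push_cast
      ring
    rw [eq_div_iff (by positivity), hfac, Nat.factorial_succ k]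
    field_simp at hrec
    push_cast
    linear_combination (2 * k + 2 : ℝ) * hrec

noncomputable def legendre (N : ℕ) : ℝ[X] :=
  C (1 / (2 ^ N * N ! : ℝ)) * derivative^[N] ((X ^ 2 - 1) ^ N)

theorem legendreP_eq_eval (N : ℕ) : legendreP N = fun x => (legendre N).eval x := by
  have hq : (fun y : ℝ => (y ^ 2 - 1) ^ N) = fun y => ((X ^ 2 - 1 : ℝ[X]) ^ N).eval y := by simp
  ext x
  simp [legendreP, legendre, hq, iteratedDeriv_eval]

theorem coeff_legendre (N k : ℕ) :
    (legendre N).coeff k =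
      (k + N).descFactorial N / (2 ^ N * N !) * ((X ^ 2 - 1 : ℝ[X]) ^ N).coeff (k + N) := by
  rw [legendre, coeff_C_mul, coeff_iterate_derivative, nsmul_eq_mul]
  ring

theorem natDegree_legendre_le (N : ℕ) : (legendre N).natDegree ≤ N := by
  refine (natDegree_C_mul_le _ _).trans ((natDegree_iterate_derivative _ N).trans ?_)
  rw [natDegree_X_sq_sub_one_pow]
  omega

theorem coeff_legendre_self (N : ℕ) :
    (legendre N).coeff N = (2 * N).descFactorial N / (2 ^ N * N !) := by
  rw [coeff_legendre, ← two_mul, coeff_X_sq_sub_one_pow_two_mul, mul_one]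

theorem degree_legendre (N : ℕ) : (legendre N).degree = N := by
  refine degree_eq_of_le_of_coeff_ne_zero (degree_le_of_natDegree_le (natDegree_legendre_le N)) ?_
  rw [coeff_legendre_self]
  have : (2 * N).descFactorial N ≠ 0 := by
    rw [Ne, Nat.descFactorial_eq_zero_iff_lt]
    omega
  positivity

theorem coeff_legendre_eq_zero_of_odd {N k : ℕ} (h : Odd (k + N)) : (legendre N).coeff k = 0 := by
  rw [coeff_legendre, coeff_X_sq_sub_one_pow_of_odd h, mul_zero]

theorem integral_mul_legendre (p : ℝ[X]) (N : ℕ) :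
    ∫ x in (-1 : ℝ)..1, p.eval x * (legendre N).eval x =
      (-1) ^ N / (2 ^ N * N !) *
        ∫ x in (-1 : ℝ)..1, (derivative^[N] p).eval x * (x ^ 2 - 1) ^ N := by
  have h1 : (X - C 1) ^ N ∣ (X ^ 2 - 1 : ℝ[X]) ^ N :=
    X_sq_sub_one_pow_eq_mul N ▸ dvd_mul_right _ _
  have h2 : (X - C (-1)) ^ N ∣ (X ^ 2 - 1 : ℝ[X]) ^ N :=
    X_sq_sub_one_pow_eq_mul N ▸ dvd_mul_left _ _
  simp only [legendre, eval_mul, eval_C, mul_left_comm _ (1 / _ : ℝ)]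
  rw [integral_const_mul, integral_eval_mul_iterate_derivative_eval
    (fun k hk => isRoot_iterate_derivative_of_pow_dvd h2 hk)
    (fun k hk => isRoot_iterate_derivative_of_pow_dvd h1 hk)]
  simp only [eval_pow, eval_sub, eval_X, eval_one]
  ring

theorem integral_mul_legendre_eq_zero {p : ℝ[X]} {N : ℕ} (hp : p.natDegree < N) :
    ∫ x in (-1 : ℝ)..1, p.eval x * (legendre N).eval x = 0 := by
  simp [integral_mul_legendre, iterate_derivative_eq_zero hp]

theorem integral_legendre_mul_self (N : ℕ) :
    ∫ x in (-1 : ℝ)..1, (legendre N).eval x * (legendre N).eval x = 2 / (2 * N + 1) := by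
  have hfac : ((2 * N).descFactorial N * N ! : ℝ) = (2 * N)! := by
    rw [mul_comm]
    exact_mod_cast (show 2 * N - N = N by omega) ▸ Nat.factorial_mul_descFactorial (by omega)
  have hfac' : ((2 * N + 1)! : ℝ) = (2 * N + 1) * (2 * N)! := by
    push_cast [Nat.factorial_succ]
    ring
  rw [integral_mul_legendre, iterate_derivative_eq_C_of_natDegree_le (natDegree_legendre_le N),
    coeff_legendre_self]
  simp only [eval_C]
  rw [integral_const_mul, integral_sq_sub_one_pow, hfac']
  field_simp
  rw [← hfac, ← pow_mul, mul_comm N 2, pow_mul, neg_one_sq, one_pow]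
  ring

theorem integral_legendre_mul_legendre (M N : ℕ) :
    ∫ x in (-1 : ℝ)..1, (legendre M).eval x * (legendre N).eval x =
      if M = N then (2 / (2 * N + 1) : ℝ) else 0 := by
  split_ifs with h
  · rw [h, integral_legendre_mul_self]
  rcases lt_or_gt_of_ne h with h | h
  · exact integral_mul_legendre_eq_zero ((natDegree_legendre_le M).trans_lt h)
  · simp_rw [mul_comm (eval _ (legendre M))]
    exact integral_mul_legendre_eq_zero ((natDegree_legendre_le N).trans_lt h)

noncomputable def legendreSequence : Polynomial.Sequence ℝ := ⟨legendre, degree_legendre⟩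

theorem span_legendre_eq_degreeLE (D : ℕ) :
    Submodule.span ℝ (legendre '' Set.Iic D) = degreeLE ℝ D :=
  legendreSequence.span_degreeLE fun i _ =>
    (leadingCoeff_ne_zero.2 (legendreSequence.ne_zero i)).isUnit

noncomputable def integralAgainst (w : ℝ[X]) : ℝ[X] →ₗ[ℝ] ℝ where
  toFun p := ∫ x in (-1 : ℝ)..1, p.eval x * w.eval x
  map_add' p q := by
    simp only [eval_add, add_mul]
    exact integral_add ((p.continuous.mul w.continuous).intervalIntegrable _ _)
      ((q.continuous.mul w.continuous).intervalIntegrable _ _)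
  map_smul' c p := by
    simp [mul_assoc, integral_const_mul]

/-- With `(legendre N).coeff n = P_N^{(n)}(0) / n!` and `(2N + 1) / 2 = 1 / h_N`, the kernel `k`
of the statement is `(-1)^n n!` times `legendreKernel {n, n + 2, …, n + 2m} n`. -/
noncomputable def legendreKernel (S : Finset ℕ) (n : ℕ) : ℝ[X] :=
  ∑ N ∈ S, C ((legendre N).coeff n * ((2 * N + 1) / 2)) * legendre N

theorem integral_legendre_mul_legendreKernel (S : Finset ℕ) (n N : ℕ) :
    ∫ x in (-1 : ℝ)..1, (legendre N).eval x * (legendreKernel S n).eval x =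
      if N ∈ S then (legendre N).coeff n else 0 := by
  simp only [legendreKernel, eval_finsetSum, eval_mul, eval_C, Finset.mul_sum,
    mul_left_comm ((legendre N).eval _)]
  rw [integral_finsetSum]
  · simp_rw [integral_const_mul, integral_legendre_mul_legendre]
    simp only [Finset.sum_ite_eq, mul_ite, mul_zero]
    congr 1
    field_simp
  · intro M _
    exact (continuous_const.mul ((legendre N).continuous.mul
      (legendre M).continuous)).intervalIntegrable _ _

theorem integral_mul_legendreKernel {S : Finset ℕ} {n D : ℕ}
    (hS : ∀ N ≤ D, (legendre N).coeff n ≠ 0 → N ∈ S) {p : ℝ[X]}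
    (hp : p.natDegree ≤ D) :
    ∫ x in (-1 : ℝ)..1, p.eval x * (legendreKernel S n).eval x = p.coeff n := by
  have hmem : p ∈ Submodule.span ℝ (legendre '' Set.Iic D) := by
    rw [span_legendre_eq_degreeLE]
    exact mem_degreeLE.2 (degree_le_of_natDegree_le hp)
  refine LinearMap.eqOn_span' (f := integralAgainst (legendreKernel S n)) (g := lcoeff ℝ n) ?_
    hmem
  rintro _ ⟨N, hN, rfl⟩
  change _ = (legendre N).coeff n
  simp only [integralAgainst, LinearMap.coe_mk, AddHom.coe_mk]
  rw [integral_legendre_mul_legendreKernel, ite_eq_left_iff]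
  exact fun hNS => (not_not.1 (mt (hS N hN) hNS)).symm

theorem mem_image_of_coeff_legendre_ne_zero {n m N : ℕ} (hN : N ≤ n + 2 * m + 1)
    (h : (legendre N).coeff n ≠ 0) : N ∈ (Finset.range (m + 1)).image (n + 2 * ·) := by
  have hnN : n ≤ N := by
    by_contra! hlt
    exact h (coeff_eq_zero_of_natDegree_lt ((natDegree_legendre_le N).trans_lt hlt))
  obtain ⟨j, hj⟩ : Even (n + N) := by
    by_contra hodd
    exact h (coeff_legendre_eq_zero_of_odd (Nat.not_even_iff_odd.1 hodd))
  simp only [Finset.mem_image, Finset.mem_range]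
  exact ⟨j - n, by omega, by omega⟩

theorem iteratedDeriv_legendreP_zero (N n : ℕ) :
    iteratedDeriv n (legendreP N) 0 = n ! * (legendre N).coeff n := by
  simp only [legendreP_eq_eval, iteratedDeriv_eval, ← coeff_zero_eq_eval_zero,
    coeff_iterate_derivative, zero_add, Nat.descFactorial_self, nsmul_eq_mul]

theorem kker_eq (n m : ℕ) (t : ℝ) :
    kker n m t =
      (-1) ^ n * n ! * (legendreKernel ((Finset.range (m + 1)).image (n + 2 * ·)) n).eval t := by
  rw [kker, legendreKernel, Finset.sum_image (M := ℝ[X]), eval_finsetSum, Finset.mul_sum,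
    Finset.mul_sum]
  · refine Finset.sum_congr rfl fun j _ => ?_
    rw [iteratedDeriv_legendreP_zero, legendreP_eq_eval, eval_mul, eval_C]
    push_cast
    field_simp
  · intro i _ j _ h
    simpa using h

theorem stmt2_general (n m : ℕ) (l : ℕ) (hl : l ≤ n + 2*m + 1) :
    (∫ t in (-1:ℝ)..1, t ^ l * kker n m t) =
      if l = n then (-1:ℝ)^n * (Nat.factorial n : ℝ) else 0 := by
  have hK := integral_mul_legendreKernel (fun N hN => mem_image_of_coeff_legendre_ne_zero hN)
    ((natDegree_X_pow_le l).trans hl)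
  calc ∫ t in (-1:ℝ)..1, t ^ l * kker n m t
      = (-1) ^ n * n ! * ∫ t in (-1:ℝ)..1, (X ^ l : ℝ[X]).eval t *
          (legendreKernel ((Finset.range (m + 1)).image (n + 2 * ·)) n).eval t := by
        rw [← integral_const_mul]
        refine integral_congr fun t _ => ?_
        simp only [kker_eq, eval_pow, eval_X]
        ring
    _ = if l = n then (-1:ℝ)^n * (Nat.factorial n : ℝ) else 0 := by
        rw [hK, coeff_X_pow]
        rcases eq_or_ne l n with rfl | h
        · simp
        · simp [h, h.symm]

theorem stmt2 (n m : ℕ) (hn : 1 ≤ n) (l : ℕ) (hl : l ≤ n + 2*m + 1) :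
    (∫ t in (-1:ℝ)..1, t ^ l * kker n m t) =
      if l = n then (-1:ℝ)^n * (Nat.factorial n : ℝ) else 0 :=
  stmt2_general n m l hl
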